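/- In K^M_2(𝔽_q) for a finite field 𝔽_q, every symbol vanishes: {a, b} = 0 for all nonzero a, b ∈ 𝔽_q; hence K^M_2(𝔽_q) = 0. -/

import Mathlib

open TensorProduct

/-- The subgroup of Steinberg relations in `kˣ ⊗ℤ kˣ`: generated by `a ⊗ b` with `a + b = 1`. -/
noncomputable def SteinbergSubgroup (k : Type*) [Field k] :
    AddSubgroup (Additive kˣ ⊗[ℤ] Additive kˣ) :=
  AddSubgroup.closure
    {z | ∃ a b : kˣ, (a : k) + (b : k) = 1 ∧
      z = Additive.ofMul a ⊗ₜ[ℤ] Additive.ofMul b}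

/-- The second Milnor K-group of a field `k`. -/
abbrev MilnorK2 (k : Type*) [Field k] :=
  (Additive kˣ ⊗[ℤ] Additive kˣ) ⧸ SteinbergSubgroup k

/-- The Milnor symbol `{a, b}` in `K^M_2(k)`. -/
noncomputable def milnorSymbol {k : Type*} [Field k] (a b : kˣ) : MilnorK2 k :=
  QuotientAddGroup.mk (Additive.ofMul a ⊗ₜ[ℤ] Additive.ofMul b)

/-! The unit group of `𝔽_q` is cyclic, say generated by `g`, so by bilinearity every symbol is a
multiple of `{g, g}`. The relation `{a, -a} = 0`, valid in every field, gives
`{g, g} = -{g, -1}` and hence `2 {g, g} = 0`; in characteristic `2` already `{g, g} = {g, -g} = 0`.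
In odd characteristic, counting squares shows that `1 = a + b` with `a`, `b` both nonsquares,
i.e. odd powers `g ^ i`, `g ^ j`; the Steinberg relation then gives `i j {g, g} = 0` with
`i j` odd, so `{g, g} = 0`. -/

section MilnorSymbol

variable {k : Type*} [Field k]

lemma milnorSymbol_of_add_eq_one {a b : kˣ} (h : (a : k) + (b : k) = 1) :
    milnorSymbol a b = 0 :=
  (QuotientAddGroup.eq_zero_iff _).2 <| AddSubgroup.subset_closure ⟨a, b, h, rfl⟩

lemma milnorSymbol_mul_left (a b c : kˣ) :
    milnorSymbol (a * b) c = milnorSymbol a c + milnorSymbol b c := by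
  simp only [milnorSymbol, ofMul_mul, add_tmul, QuotientAddGroup.mk_add]

lemma milnorSymbol_mul_right (a b c : kˣ) :
    milnorSymbol a (b * c) = milnorSymbol a b + milnorSymbol a c := by
  simp only [milnorSymbol, ofMul_mul, tmul_add, QuotientAddGroup.mk_add]

lemma milnorSymbol_one_left (b : kˣ) : milnorSymbol 1 b = 0 := by
  rw [milnorSymbol, ofMul_one, zero_tmul, QuotientAddGroup.mk_zero]

lemma milnorSymbol_one_right (a : kˣ) : milnorSymbol a 1 = 0 := by
  rw [milnorSymbol, ofMul_one, tmul_zero, QuotientAddGroup.mk_zero]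

lemma milnorSymbol_zpow_zpow (a b : kˣ) (m n : ℤ) :
    milnorSymbol (a ^ m) (b ^ n) = (m * n) • milnorSymbol a b := by
  rw [milnorSymbol, milnorSymbol, ofMul_zpow, ofMul_zpow,
    ← smul_tmul' m (Additive.ofMul a) (n • Additive.ofMul b),
    tmul_smul n (Additive.ofMul a) (Additive.ofMul b), smul_smul, QuotientAddGroup.mk_zsmul]

lemma milnorSymbol_inv_left (a b : kˣ) : milnorSymbol a⁻¹ b = -milnorSymbol a b :=
  eq_neg_of_add_eq_zero_left <| by
    rw [← milnorSymbol_mul_left, inv_mul_cancel, milnorSymbol_one_left]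

lemma milnorSymbol_inv_right (a b : kˣ) : milnorSymbol a b⁻¹ = -milnorSymbol a b :=
  eq_neg_of_add_eq_zero_left <| by
    rw [← milnorSymbol_mul_right, inv_mul_cancel, milnorSymbol_one_right]

/-- For `a ≠ 1` this is the identity `-a = (1 - a) / (1 - a⁻¹)`. -/
lemma milnorSymbol_self_neg (a : kˣ) : milnorSymbol a (-a) = 0 := by
  obtain rfl | ha := eq_or_ne a 1
  · exact milnorSymbol_one_left _
  have ha' : (a : k) ≠ 1 := mt Units.val_eq_one.1 ha
  have ha_inv : (a⁻¹ : k) ≠ 1 := inv_ne_one.2 ha'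
  set u := Units.mk0 (1 - (a : k)) (sub_ne_zero.2 ha'.symm)
  set v := Units.mk0 (1 - (a⁻¹ : k)) (sub_ne_zero.2 ha_inv.symm)
  have hneg : -a = u * v⁻¹ := by
    refine Units.ext ?_
    have ha0 : (a : k) ≠ 0 := a.ne_zero
    have hv : (1 - (a⁻¹ : k)) ≠ 0 := sub_ne_zero.2 ha_inv.symm
    simp only [Units.val_neg, Units.val_mul, Units.val_inv_eq_inv_val, Units.val_mk0, u, v]
    field_simp
    ring
  have hau : milnorSymbol a u = 0 := milnorSymbol_of_add_eq_one (by simp [u])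
  have hav : milnorSymbol a⁻¹ v = 0 := milnorSymbol_of_add_eq_one (by simp [v])
  rw [milnorSymbol_inv_left, neg_eq_zero] at hav
  rw [hneg, milnorSymbol_mul_right, milnorSymbol_inv_right, hau, hav, neg_zero, add_zero]

lemma two_zsmul_milnorSymbol_self (a : kˣ) : (2 : ℤ) • milnorSymbol a a = 0 := by
  have h := milnorSymbol_self_neg a
  rw [← neg_one_mul, milnorSymbol_mul_right, add_eq_zero_iff_neg_eq] at h
  rw [← h, smul_neg, ← one_mul (2 : ℤ), ← milnorSymbol_zpow_zpow, zpow_one,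
    even_two.neg_one_zpow, milnorSymbol_one_right, neg_zero]

lemma milnorSymbol_self_eq_zero_of_odd {g : kˣ} {i j : ℤ} (hi : Odd i) (hj : Odd j)
    (h : ((g ^ i : kˣ) : k) + ((g ^ j : kˣ) : k) = 1) : milnorSymbol g g = 0 := by
  obtain ⟨t, ht⟩ := hi.mul hj
  have := milnorSymbol_of_add_eq_one h
  rwa [milnorSymbol_zpow_zpow, ht, add_smul, mul_comm, mul_smul,
    two_zsmul_milnorSymbol_self, smul_zero, zero_add, one_smul] at this

lemma forall_milnorSymbol_eq_zero_of_generator {g : kˣ} (hg : ∀ x, x ∈ Subgroup.zpowers g)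
    (hgg : milnorSymbol g g = 0) (a b : kˣ) : milnorSymbol a b = 0 := by
  obtain ⟨i, rfl⟩ := Subgroup.mem_zpowers_iff.1 (hg a)
  obtain ⟨j, rfl⟩ := Subgroup.mem_zpowers_iff.1 (hg b)
  rw [milnorSymbol_zpow_zpow, hgg, smul_zero]

lemma subsingleton_milnorK2 (h : ∀ a b : kˣ, milnorSymbol a b = 0) :
    Subsingleton (MilnorK2 k) := by
  refine subsingleton_of_forall_eq 0 fun z => ?_
  obtain ⟨w, rfl⟩ := QuotientAddGroup.mk_surjective z
  induction w using TensorProduct.induction_on with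
  | zero => rfl
  | tmul x y => exact h x.toMul y.toMul
  | add u v hu hv => rw [QuotientAddGroup.mk_add, hu, hv, add_zero]

end MilnorSymbol

section FiniteField

open Finset

variable {k : Type*} [Field k]

lemma exists_odd_zpow_eq_of_not_isSquare {g : kˣ} (hg : ∀ x, x ∈ Subgroup.zpowers g) {x : k}
    (hx : ¬IsSquare x) : ∃ i : ℤ, Odd i ∧ ((g ^ i : kˣ) : k) = x := by
  have hx0 : x ≠ 0 := by rintro rfl; exact hx IsSquare.zero
  obtain ⟨i, hi⟩ := Subgroup.mem_zpowers_iff.1 (hg (Units.mk0 x hx0))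
  refine ⟨i, Int.not_even_iff_odd.1 fun he => hx ?_, by rw [hi, Units.val_mk0]⟩
  simpa [hi] using (he.isSquare_zpow g).map (Units.coeHom k)

variable [Fintype k]

lemma card_filter_quadraticChar_eq_one [DecidableEq k] (hk : ringChar k ≠ 2) :
    #{a | quadraticChar k a = 1} = #{a | quadraticChar k a = -1} := by
  have hpt (a : k) : quadraticChar k a =
      (if quadraticChar k a = 1 then 1 else 0) - (if quadraticChar k a = -1 then 1 else 0) := by
    rcases eq_or_ne a 0 with rfl | ha
    · simp
    · rcases quadraticChar_dichotomy ha with h | h <;> simp [h]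
  have hsum := quadraticChar_sum_zero hk
  rw [Finset.sum_congr rfl fun a _ => hpt a, Finset.sum_sub_distrib, Finset.sum_boole,
    Finset.sum_boole, sub_eq_zero] at hsum
  exact_mod_cast hsum

/-- Otherwise `a ↦ 1 - a` would inject the nonsquares into the nonzero squares other than `1`,
of which there is one fewer. -/
lemma FiniteField.exists_not_isSquare_add_eq_one (hk : ringChar k ≠ 2) :
    ∃ a b : k, ¬IsSquare a ∧ ¬IsSquare b ∧ a + b = 1 := by
  classical
  by_contra! h
  have hmaps : Set.MapsTo (fun a => 1 - a) (({a | quadraticChar k a = -1} : Finset k) : Set k)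
      ((({a | quadraticChar k a = 1} : Finset k).erase 1 : Finset k) : Set k) := by
    intro a ha
    replace ha : ¬IsSquare a := quadraticChar_neg_one_iff_not_isSquare.1 (Finset.mem_filter.1 ha).2
    have ha0 : a ≠ 0 := by rintro rfl; exact ha IsSquare.zero
    have ha1 : a ≠ 1 := by rintro rfl; exact ha IsSquare.one
    have hsq : IsSquare (1 - a) := by_contra fun hb => h a (1 - a) ha hb (by ring)
    rw [Finset.mem_coe, Finset.mem_erase, Finset.mem_filter, ne_eq, sub_eq_self,
      quadraticChar_one_iff_isSquare (sub_ne_zero.2 ha1.symm)]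
    exact ⟨ha0, Finset.mem_univ _, hsq⟩
  have hle := Finset.card_le_card_of_injOn _ hmaps sub_right_injective.injOn
  obtain ⟨n, hn⟩ := quadraticChar_exists_neg_one hk
  have hpos : 0 < #({a | quadraticChar k a = -1} : Finset k) :=
    Finset.card_pos.2 ⟨n, Finset.mem_filter.2 ⟨Finset.mem_univ n, hn⟩⟩
  rw [Finset.card_erase_of_mem (by simp), card_filter_quadraticChar_eq_one hk] at hle
  omega

end FiniteField

theorem milnorK2_finite_field (k : Type*) [Field k] [Fintype k] :
    (∀ a b : kˣ, milnorSymbol a b = 0) ∧ Subsingleton (MilnorK2 k) := by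
  obtain ⟨g, hg⟩ := IsCyclic.exists_generator (α := kˣ)
  have hgg : milnorSymbol g g = 0 := by
    by_cases hk : ringChar k = 2
    · have hneg : -g = g := Units.ext <| by
        rw [Units.val_neg, ← neg_one_mul, neg_one_eq_one_iff.2 hk, one_mul]
      simpa [hneg] using milnorSymbol_self_neg g
    · obtain ⟨a, b, ha, hb, hab⟩ := FiniteField.exists_not_isSquare_add_eq_one hk
      obtain ⟨i, hi, rfl⟩ := exists_odd_zpow_eq_of_not_isSquare hg ha
      obtain ⟨j, hj, rfl⟩ := exists_odd_zpow_eq_of_not_isSquare hg hb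
      exact milnorSymbol_self_eq_zero_of_odd hi hj hab
  have hall := forall_milnorSymbol_eq_zero_of_generator hg hgg
  exact ⟨hall, subsingleton_milnorK2 hall⟩
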